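/- arXiv:1510.08694 — 6 statements merged into one kernel-verified Lean document; each statement's English description precedes it below -/
import Mathlib

section
/- Under multivariate regular variation, for every unit vector u the projection uᵀX₁ is in the univariate max-domain of attraction with tail index α: lim_{t→∞} (1 - F_u(tr))/(1 - F_u(t)) = r^{-α} for all r > 0, where F_u is the distribution function of uᵀX₁. -/
open MeasureTheory Filter Set Topology
open scoped RealInnerProductSpace Pointwise

/-! Write `H s = {x | s ≤ ⟪u, x⟫}`. For `t > 0` the event `{t s ≤ ⟪u, X⟫}` is `{X ∈ t • H s}`,
and `H s` is bounded away from the origin when `s > 0`. Homogeneity gives `ν (H s) = s ^ (-α) ν (H 1)`,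
so `s ↦ ν (H s)` is continuous and the hyperplane `{⟪u, x⟫ = s}`, which contains the frontier of
`H s`, is `ν`-null. The regular-variation limit therefore applies to `H r` and `H 1`, and the
ratio of the two limits, both normalised by `P(‖X‖ ≥ t)`, is `r ^ (-α)`. -/

theorem Filter.Tendsto.div_of_div_common {ι : Type*} {l : Filter ι} {f g h : ι → ℝ} {a b : ℝ}
    (hf : Tendsto (fun t => f t / g t) l (𝓝 a)) (hh : Tendsto (fun t => h t / g t) l (𝓝 b))
    (hb : b ≠ 0) : Tendsto (fun t => f t / h t) l (𝓝 (a / b)) := by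
  refine (hf.div hh hb).congr' ?_
  filter_upwards [hh.eventually_ne hb] with t ht
  have hg : g t ≠ 0 := by
    rintro hg
    simp [hg] at ht
  exact div_div_div_cancel_right₀ hg _ _

theorem MeasureTheory.measure_preimage_singleton_eq_zero_of_continuousWithinAt
    {α : Type*} [MeasurableSpace α] (ν : Measure α) {f : α → ℝ} (hf : Measurable f) {s : ℝ}
    (hfin : ν (f ⁻¹' Ici s) ≠ ⊤)
    (hcont : Tendsto (fun s' => ν (f ⁻¹' Ici s')) (𝓝[>] s) (𝓝 (ν (f ⁻¹' Ici s)))) :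
    ν (f ⁻¹' {s}) = 0 := by
  have hsplit : ∀ s' > s, ν (f ⁻¹' {s}) + ν (f ⁻¹' Ici s') ≤ ν (f ⁻¹' Ici s) := by
    intro s' hs'
    have hdisj : Disjoint (f ⁻¹' {s}) (f ⁻¹' Ici s') :=
      (disjoint_singleton_left.2 (notMem_Ici.2 hs')).preimage f
    rw [← measure_union hdisj (hf measurableSet_Ici)]
    refine measure_mono (union_subset ?_ (preimage_mono (Ici_subset_Ici.2 hs'.le)))
    exact preimage_mono (singleton_subset_iff.2 self_mem_Ici)
  have hle : ν (f ⁻¹' {s}) + ν (f ⁻¹' Ici s) ≤ 0 + ν (f ⁻¹' Ici s) := by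
    rw [zero_add]
    exact le_of_tendsto (hcont.const_add _) (eventually_nhdsWithin_of_forall hsplit)
  exact nonpos_iff_eq_zero.1 ((ENNReal.add_le_add_iff_right hfin).1 hle)

section HalfSpace

variable {E : Type*} [NormedAddCommGroup E] [InnerProductSpace ℝ E]

def halfSpace (u : E) (s : ℝ) : Set E := (⟪u, ·⟫) ⁻¹' Ici s

theorem continuous_inner_left (u : E) : Continuous (⟪u, ·⟫) :=
  continuous_const.inner continuous_id

theorem isClosed_halfSpace (u : E) (s : ℝ) : IsClosed (halfSpace u s) :=
  isClosed_Ici.preimage (continuous_inner_left u)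

theorem le_norm_of_mem_halfSpace {u x : E} {s : ℝ} (hu : ‖u‖ ≤ 1) (hx : x ∈ halfSpace u s) :
    s ≤ ‖x‖ :=
  calc s ≤ ⟪u, x⟫ := hx
    _ ≤ ‖u‖ * ‖x‖ := real_inner_le_norm u x
    _ ≤ ‖x‖ := mul_le_of_le_one_left (norm_nonneg x) hu

theorem smul_halfSpace (u : E) (s : ℝ) {a : ℝ} (ha : 0 < a) :
    a • halfSpace u s = halfSpace u (a * s) := by
  ext x
  rw [mem_smul_set_iff_inv_smul_mem₀ ha.ne']
  simp only [halfSpace, mem_preimage, mem_Ici, real_inner_smul_right]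
  exact le_inv_mul_iff₀ ha

theorem frontier_halfSpace_subset (u : E) (s : ℝ) :
    frontier (halfSpace u s) ⊆ (⟪u, ·⟫) ⁻¹' {s} := by
  refine ((continuous_inner_left u).frontier_preimage_subset _).trans ?_
  rw [frontier_Ici]

variable [MeasurableSpace E] [OpensMeasurableSpace E]

theorem measurableSet_halfSpace (u : E) (s : ℝ) : MeasurableSet (halfSpace u s) :=
  (isClosed_halfSpace u s).measurableSet

theorem measure_frontier_halfSpace_eq_zero {ν : Measure E} {u : E} {α s : ℝ}
    (hν : ∀ s > 0, ν (halfSpace u s) = ENNReal.ofReal (s ^ (-α)) * ν (halfSpace u 1))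
    (hfin : ν (halfSpace u 1) ≠ ⊤) (hs : 0 < s) : ν (frontier (halfSpace u s)) = 0 := by
  refine measure_mono_null (frontier_halfSpace_subset u s) ?_
  refine measure_preimage_singleton_eq_zero_of_continuousWithinAt ν
    (continuous_inner_left u).measurable ?_ ?_
  · exact (hν s hs).trans_ne (ENNReal.mul_ne_top ENNReal.ofReal_ne_top hfin)
  · have hpow : ContinuousAt (fun s' : ℝ => ENNReal.ofReal (s' ^ (-α))) s :=
      ENNReal.continuous_ofReal.continuousAt.comp (Real.continuousAt_rpow_const s (-α) (.inl hs.ne'))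
    change Tendsto (fun s' => ν (halfSpace u s')) _ (𝓝 (ν (halfSpace u s)))
    rw [hν s hs]
    refine ((ENNReal.Tendsto.mul_const hpow.tendsto (.inr hfin)).mono_left
      nhdsWithin_le_nhds).congr' ?_
    filter_upwards [self_mem_nhdsWithin] with s' hs'
    exact (hν s' (hs.trans hs')).symm

end HalfSpace

theorem projection_max_domain_of_attraction_general {d : ℕ} {Ω : Type*} [MeasurableSpace Ω]
    (μ : Measure Ω)
    (X : Ω → EuclideanSpace ℝ (Fin d))
    (α : ℝ) (ν : Measure (EuclideanSpace ℝ (Fin d)))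
    (hom : ∀ a : ℝ, 0 < a → ∀ B : Set (EuclideanSpace ℝ (Fin d)), MeasurableSet B →
      (∃ ε > 0, ∀ x ∈ B, ε ≤ ‖x‖) → ν (a • B) = ENNReal.ofReal (a ^ (-α)) * ν B)
    (hconv : ∀ B : Set (EuclideanSpace ℝ (Fin d)), MeasurableSet B →
      (∃ ε > 0, ∀ x ∈ B, ε ≤ ‖x‖) → ν (frontier B) = 0 → ν B ≠ ⊤ →
      Tendsto (fun t : ℝ =>
          (μ {ω | X ω ∈ t • B}).toReal / (μ {ω | t ≤ ‖X ω‖}).toReal)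
        atTop (nhds (ν B).toReal))
    (hfin : ∀ u : EuclideanSpace ℝ (Fin d), ‖u‖ = 1 → ν {x | 1 ≤ ⟪u, x⟫} ≠ ⊤)
    (hpos : ∀ u : EuclideanSpace ℝ (Fin d), ‖u‖ = 1 → 0 < ν {x | 1 ≤ ⟪u, x⟫})
    (u : EuclideanSpace ℝ (Fin d)) (hu : ‖u‖ = 1) (r : ℝ) (hr : 0 < r) :
    Tendsto (fun t : ℝ =>
        (μ {ω | t * r ≤ ⟪u, X ω⟫}).toReal / (μ {ω | t ≤ ⟪u, X ω⟫}).toReal)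
      atTop (nhds (r ^ (-α))) := by
  have hbdd : ∀ s > 0, ∃ ε > 0, ∀ x ∈ halfSpace u s, ε ≤ ‖x‖ := fun s hs =>
    ⟨s, hs, fun _ hx => le_norm_of_mem_halfSpace hu.le hx⟩
  have hν : ∀ s > 0, ν (halfSpace u s) = ENNReal.ofReal (s ^ (-α)) * ν (halfSpace u 1) := by
    intro s hs
    rw [← hom s hs _ (measurableSet_halfSpace u 1) (hbdd 1 one_pos), smul_halfSpace u 1 hs, mul_one]
  have hlim : ∀ s > 0, Tendsto (fun t : ℝ =>
      (μ {ω | t * s ≤ ⟪u, X ω⟫}).toReal / (μ {ω | t ≤ ‖X ω‖}).toReal)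
      atTop (𝓝 (ν (halfSpace u s)).toReal) := by
    intro s hs
    refine (hconv _ (measurableSet_halfSpace u s) (hbdd s hs)
      (measure_frontier_halfSpace_eq_zero hν (hfin u hu) hs)
      ((hν s hs).trans_ne (ENNReal.mul_ne_top ENNReal.ofReal_ne_top (hfin u hu)))).congr' ?_
    filter_upwards [eventually_gt_atTop 0] with t ht
    rw [smul_halfSpace u s ht]
    rfl
  have hc : (ν (halfSpace u 1)).toReal ≠ 0 := (ENNReal.toReal_pos (hpos u hu).ne' (hfin u hu)).ne'
  have hνr : (ν (halfSpace u r)).toReal = r ^ (-α) * (ν (halfSpace u 1)).toReal := by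
    rw [hν r hr, ENNReal.toReal_mul, ENNReal.toReal_ofReal (Real.rpow_nonneg hr.le _)]
  simpa only [hνr, mul_one, mul_div_cancel_right₀ _ hc] using
    (hlim r hr).div_of_div_common (hlim 1 one_pos) hc

/-- Under multivariate regular variation, every projection `uᵀX₁` on a unit vector
`u` is in the univariate max-domain of attraction with tail index `α`:
`(1 - F_u(tr))/(1 - F_u(t)) → r^{-α}` as `t → ∞`, for every `r > 0`. -/
theorem projection_max_domain_of_attraction {d : ℕ} {Ω : Type*} [MeasurableSpace Ω]
    (μ : Measure Ω) [IsProbabilityMeasure μ]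
    (X : Ω → EuclideanSpace ℝ (Fin d)) (hX : Measurable X)
    (α : ℝ) (hα : 0 < α) (ν : Measure (EuclideanSpace ℝ (Fin d)))
    (hom : ∀ a : ℝ, 0 < a → ∀ B : Set (EuclideanSpace ℝ (Fin d)), MeasurableSet B →
      (∃ ε > 0, ∀ x ∈ B, ε ≤ ‖x‖) → ν (a • B) = ENNReal.ofReal (a ^ (-α)) * ν B)
    (hconv : ∀ B : Set (EuclideanSpace ℝ (Fin d)), MeasurableSet B →
      (∃ ε > 0, ∀ x ∈ B, ε ≤ ‖x‖) → ν (frontier B) = 0 → ν B ≠ ⊤ →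
      Tendsto (fun t : ℝ =>
          (μ {ω | X ω ∈ t • B}).toReal / (μ {ω | t ≤ ‖X ω‖}).toReal)
        atTop (nhds (ν B).toReal))
    (hfin : ∀ u : EuclideanSpace ℝ (Fin d), ‖u‖ = 1 → ν {x | 1 ≤ ⟪u, x⟫} ≠ ⊤)
    (hpos : ∀ u : EuclideanSpace ℝ (Fin d), ‖u‖ = 1 → 0 < ν {x | 1 ≤ ⟪u, x⟫})
    (u : EuclideanSpace ℝ (Fin d)) (hu : ‖u‖ = 1) (r : ℝ) (hr : 0 < r) :
    Tendsto (fun t : ℝ =>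
        (μ {ω | t * r ≤ ⟪u, X ω⟫}).toReal / (μ {ω | t ≤ ⟪u, X ω⟫}).toReal)
      atTop (nhds (r ^ (-α))) :=
  projection_max_domain_of_attraction_general μ X α ν hom hconv hfin hpos u hu r hr
end

section
/- If for each unit vector u, the projection uᵀX₁ has a continuous distribution function, then the half-space depth function D(x) = inf_{‖u‖=1} P(uᵀX₁ ≥ uᵀx) is continuous on ℝ^d. -/
/-!
A continuous distribution function has no atoms, so for every unit vector `u` the event
`⟪u, X⟫ = ⟪u, x⟫` is null. Off that event the indicator of `⟪u, x⟫ ≤ ⟪u, X⟫` is locally constant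
in `(x, u)`, hence by dominated convergence `(x, u) ↦ P(⟪u, x⟫ ≤ ⟪u, X⟫)` is jointly continuous on
`ℝ^d × S^{d-1}`. An infimum over the compact sphere of a jointly continuous function is continuous.
-/

open MeasureTheory
open scoped RealInnerProductSpace

open Filter ProbabilityTheory

lemma measure_singleton_eq_zero_of_continuousAt_cdf (ν : Measure ℝ) [IsProbabilityMeasure ν]
    {w : ℝ} (h : ContinuousAt (cdf ν) w) : ν {w} = 0 := by
  rw [← measure_cdf ν, StieltjesFunction.measure_singleton,
    (monotone_cdf ν).continuousWithinAt_Iio_iff_leftLim_eq.1 h.continuousWithinAt, sub_self,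
    ENNReal.ofReal_zero]

lemma measure_setOf_eq_eq_zero_of_continuousAt {Ω : Type*} [MeasurableSpace Ω]
    {μ : Measure Ω} [IsProbabilityMeasure μ] {Z : Ω → ℝ} (hZ : Measurable Z) {w : ℝ}
    (h : ContinuousAt (fun t => (μ {ω | Z ω ≤ t}).toReal) w) : μ {ω | Z ω = w} = 0 := by
  have := Measure.isProbabilityMeasure_map (μ := μ) hZ.aemeasurable
  have hcdf : cdf (μ.map Z) = fun t => (μ {ω | Z ω ≤ t}).toReal := by
    ext t
    rw [cdf_eq_real, measureReal_def, Measure.map_apply hZ measurableSet_Iic]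
    rfl
  have := measure_singleton_eq_zero_of_continuousAt_cdf (μ.map Z) (hcdf ▸ h)
  rwa [Measure.map_apply hZ (measurableSet_singleton w)] at this

lemma continuousAt_measure_setOf_le {Ω T : Type*} [MeasurableSpace Ω] {μ : Measure Ω}
    [IsFiniteMeasure μ] [TopologicalSpace T] [FirstCountableTopology T]
    {a : T → ℝ} {Z : T → Ω → ℝ} {t₀ : T} (hZm : ∀ t, Measurable (Z t))
    (ha : ContinuousAt a t₀) (hZ : ∀ ω, ContinuousAt (fun t => Z t ω) t₀)
    (h_atom : μ {ω | Z t₀ ω = a t₀} = 0) :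
    ContinuousAt (fun t => μ {ω | a t ≤ Z t ω}) t₀ := by
  refine tendsto_measure_of_ae_tendsto_indicator_of_isFiniteMeasure _
    (measurableSet_le measurable_const (hZm t₀))
    (fun t => measurableSet_le measurable_const (hZm t)) ?_
  filter_upwards [measure_eq_zero_iff_ae_notMem.1 h_atom] with ω hω
  have hgap : ContinuousAt (fun t => Z t ω - a t) t₀ := (hZ ω).sub ha
  rcases lt_or_gt_of_ne (sub_ne_zero.2 (hω : Z t₀ ω ≠ a t₀)) with hneg | hpos
  · filter_upwards [hgap.eventually (eventually_lt_nhds hneg)] with t ht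
    show a t ≤ Z t ω ↔ a t₀ ≤ Z t₀ ω
    constructor <;> intro <;> linarith
  · filter_upwards [hgap.eventually (eventually_gt_nhds hpos)] with t ht
    show a t ≤ Z t ω ↔ a t₀ ≤ Z t₀ ω
    constructor <;> intro <;> linarith

lemma continuous_iInf_of_compactSpace {α β : Type*} [TopologicalSpace α] [TopologicalSpace β]
    [CompactSpace β] {f : α → β → ℝ} (hf : Continuous ↿f) : Continuous fun x => ⨅ b, f x b := by
  have h := isCompact_univ.continuous_sInf hf
  simp only [Set.image_univ] at h
  exact h

lemma continuousAt_measure_inner_le_inner {Ω E : Type*} [MeasurableSpace Ω] {μ : Measure Ω}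
    [IsFiniteMeasure μ] [NormedAddCommGroup E] [InnerProductSpace ℝ E] [MeasurableSpace E]
    [OpensMeasurableSpace E] {X : Ω → E} (hX : Measurable X) {p : E × E}
    (h_atom : μ {ω | ⟪p.2, X ω⟫ = ⟪p.2, p.1⟫} = 0) :
    ContinuousAt (fun q : E × E => μ {ω | ⟪q.2, q.1⟫ ≤ ⟪q.2, X ω⟫}) p :=
  continuousAt_measure_setOf_le
    (fun q => (continuous_const.inner continuous_id).measurable.comp hX) (by fun_prop)
    (fun ω => by fun_prop) h_atom

theorem halfspace_depth_continuous_general {d : ℕ} {Ω : Type*} [MeasurableSpace Ω]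
    (μ : Measure Ω) [IsProbabilityMeasure μ]
    (X : Ω → EuclideanSpace ℝ (Fin d)) (hX : Measurable X)
    (hcont : ∀ u : EuclideanSpace ℝ (Fin d), ‖u‖ = 1 →
      Continuous (fun w : ℝ => (μ {ω | ⟪u, X ω⟫ ≤ w}).toReal)) :
    Continuous (fun x : EuclideanSpace ℝ (Fin d) =>
      ⨅ u : {u : EuclideanSpace ℝ (Fin d) // ‖u‖ = 1},
        (μ {ω | ⟪u.1, x⟫ ≤ ⟪u.1, X ω⟫}).toReal) := by
  have : CompactSpace {u : EuclideanSpace ℝ (Fin d) // ‖u‖ = 1} :=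
    (isCompact_iff_compactSpace (s := {u : EuclideanSpace ℝ (Fin d) | ‖u‖ = 1})).1 <| by
      simpa only [Metric.sphere, dist_zero_right] using
        isCompact_sphere (0 : EuclideanSpace ℝ (Fin d)) 1
  refine continuous_iInf_of_compactSpace (continuous_iff_continuousAt.2 fun q => ?_)
  have h_atom : μ {ω | ⟪q.2.1, X ω⟫ = ⟪q.2.1, q.1⟫} = 0 :=
    measure_setOf_eq_eq_zero_of_continuousAt
      ((continuous_const.inner continuous_id).measurable.comp hX) (hcont _ q.2.2).continuousAt
  have h := (continuousAt_measure_inner_le_inner hX h_atom).comp (x := q)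
    (f := Prod.map id Subtype.val) (by fun_prop)
  exact (ENNReal.tendsto_toReal (measure_ne_top μ _)).comp h

/-- If every projection `uᵀX₁` has a continuous distribution function, then the
half-space depth `D(x) = inf_{‖u‖=1} P(uᵀX₁ ≥ uᵀx)` is continuous on `ℝ^d`. -/
theorem halfspace_depth_continuous {d : ℕ} (hd : 0 < d) {Ω : Type*} [MeasurableSpace Ω]
    (μ : Measure Ω) [IsProbabilityMeasure μ]
    (X : Ω → EuclideanSpace ℝ (Fin d)) (hX : Measurable X)
    (hcont : ∀ u : EuclideanSpace ℝ (Fin d), ‖u‖ = 1 →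
      Continuous (fun w : ℝ => (μ {ω | ⟪u, X ω⟫ ≤ w}).toReal)) :
    Continuous (fun x : EuclideanSpace ℝ (Fin d) =>
      ⨅ u : {u : EuclideanSpace ℝ (Fin d) // ‖u‖ = 1},
        (μ {ω | ⟪u.1, x⟫ ≤ ⟪u.1, X ω⟫}).toReal) :=
  halfspace_depth_continuous_general μ X hX hcont
end

section
/- Under multivariate regular variation with limit measure ν homogeneous of degree -α and P(‖X₁‖ > t)/t^{-α} → c ∈ (0,∞), for every fixed r > 0 the convergence P(X₁ ∈ tH_{r,u})/t^{-α} → c·ν(H_{r,u}) holds uniformly over unit vectors u (Lemma 1). -/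
/-!
Uniformity comes from a bracketing argument on the compact unit sphere. For a unit vector `v`
and a net point `w` with `‖v - w‖ * K ≤ η * r`, outside the ball of radius `t * K` the
half-space `t • H_{r,v}` lies between `t • H_{(1+η)r,w}` and `t • H_{(1-η)r,w}`. Rescaling
the pointwise limits at `w` and the tail `P(‖X₁‖ ≥ t K) ~ c (tK)^{-α}` gives brackets whose limits
differ by `c ν(H_{r,w}) ((1-η)^{-α} - (1+η)^{-α}) + 2 c K^{-α}`, uniformly small because
`c ν(H_{r,w}) ≤ c r^{-α}`. Pointwise convergence itself is the regular-variation hypothesis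
applied to a half-space, whose boundary hyperplane is `ν`-null by homogeneity.
-/

open MeasureTheory Filter
open scoped RealInnerProductSpace Pointwise

open Set Topology

section Asymptotics

theorem Filter.Tendsto.div_mul_div_cancel {α : Type*} {l : Filter α} {f g h : α → ℝ} {a b : ℝ}
    (hfg : Tendsto (fun t => f t / g t) l (𝓝 a)) (hgh : Tendsto (fun t => g t / h t) l (𝓝 b))
    (hb : b ≠ 0) : Tendsto (fun t => f t / h t) l (𝓝 (a * b)) := by
  refine (hfg.mul hgh).congr' ?_
  filter_upwards [hgh.eventually_ne hb] with t ht
  exact div_mul_div_cancel₀ (div_ne_zero_iff.1 ht).1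

theorem tendsto_comp_mul_div_rpow {φ : ℝ → ℝ} {α c K : ℝ} (hK : 0 < K)
    (hφ : Tendsto (fun t => φ t / t ^ (-α)) atTop (𝓝 c)) :
    Tendsto (fun t => φ (t * K) / t ^ (-α)) atTop (𝓝 (c * K ^ (-α))) := by
  refine ((hφ.comp (tendsto_id.atTop_mul_const hK)).mul_const (K ^ (-α))).congr' ?_
  filter_upwards [eventually_gt_atTop 0] with t ht
  have hKα : K ^ (-α) ≠ 0 := (Real.rpow_pos_of_pos hK _).ne'
  simp only [Function.comp_apply, id, Real.mul_rpow ht.le hK.le]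
  field_simp

theorem tendsto_div_rpow_of_le_of_le_comp_mul {φ ψ : ℝ → ℝ} {α c : ℝ}
    (hφ : Tendsto (fun t => φ t / t ^ (-α)) atTop (𝓝 c)) (hle : ∀ t, φ t ≤ ψ t)
    (hle_mul : ∀ b ∈ Ioo (0 : ℝ) 1, ∀ t > 0, ψ t ≤ φ (t * b)) :
    Tendsto (fun t => ψ t / t ^ (-α)) atTop (𝓝 c) := by
  rw [tendsto_order]
  constructor
  · intro a ha
    filter_upwards [(tendsto_order.1 hφ).1 a ha, eventually_gt_atTop 0] with t hat ht
    exact hat.trans_le (div_le_div_of_nonneg_right (hle t) (Real.rpow_pos_of_pos ht _).le)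
  · intro a ha
    have hcont : Tendsto (fun b : ℝ => c * b ^ (-α)) (𝓝[<] 1) (𝓝 c) := by
      simpa using ((Real.continuousAt_rpow_const 1 (-α) (Or.inl one_ne_zero)).tendsto.const_mul
        c).mono_left nhdsWithin_le_nhds
    obtain ⟨b, hba, hb⟩ := ((hcont.eventually_lt_const ha).and
      (Ioo_mem_nhdsLT zero_lt_one)).exists
    filter_upwards [(tendsto_comp_mul_div_rpow hb.1 hφ).eventually_lt_const hba,
      eventually_gt_atTop 0] with t hat ht
    exact (div_le_div_of_nonneg_right (hle_mul b hb t ht) (Real.rpow_pos_of_pos ht _).le).trans_lt hat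

theorem exists_rpow_gap_lt {α : ℝ} (hα : 0 < α) (C D : ℝ) {ε : ℝ} (hε : 0 < ε) :
    ∃ η K : ℝ, 0 < η ∧ η < 1 ∧ 0 < K ∧
      C * ((1 - η) ^ (-α) - (1 + η) ^ (-α)) + D * K ^ (-α) < ε := by
  have hη : Tendsto (fun η : ℝ => C * ((1 - η) ^ (-α) - (1 + η) ^ (-α))) (𝓝[>] 0) (𝓝 0) := by
    have h : ContinuousAt (fun η : ℝ => C * ((1 - η) ^ (-α) - (1 + η) ^ (-α))) 0 :=
      continuousAt_const.mul
        (((continuousAt_const.sub continuousAt_id).rpow_const (Or.inl (by norm_num))).sub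
          ((continuousAt_const.add continuousAt_id).rpow_const (Or.inl (by norm_num))))
    simpa using h.tendsto.mono_left nhdsWithin_le_nhds
  have hK : Tendsto (fun K : ℝ => D * K ^ (-α)) atTop (𝓝 0) := by
    simpa using (tendsto_rpow_neg_atTop hα).const_mul D
  obtain ⟨η, hηε, hη0, hη1⟩ := ((hη.eventually_lt_const (half_pos hε)).and
    (Ioo_mem_nhdsGT zero_lt_one)).exists
  obtain ⟨K, hKε, hK0⟩ := ((hK.eventually_lt_const (half_pos hε)).and
    (eventually_gt_atTop 0)).exists
  exact ⟨η, K, hη0, hη1, hK0, by linarith⟩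

end Asymptotics

section Bracketing

variable {α ι : Type*}

/-- Finitely many asymptotic brackets of width `ε`: the ends `lo k`, `hi k` need only converge,
and it is their limits that are `ε`-close. -/
def HasFiniteBrackets (F : α → ι → ℝ) (l : Filter α) (ε : ℝ) : Prop :=
  ∃ T : Set ι, T.Finite ∧ ∃ (lo hi : ι → α → ℝ) (a b : ι → ℝ),
    (∀ k ∈ T, Tendsto (lo k) l (𝓝 (a k)) ∧ Tendsto (hi k) l (𝓝 (b k)) ∧ b k - a k ≤ ε) ∧
    ∃ s ∈ l, ∀ i, ∃ k ∈ T, ∀ t ∈ s, lo k t ≤ F t i ∧ F t i ≤ hi k t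

theorem tendstoUniformly_of_hasFiniteBrackets {l : Filter α} [l.NeBot] {F : α → ι → ℝ}
    {f : ι → ℝ} (hF : ∀ i, Tendsto (fun t => F t i) l (𝓝 (f i)))
    (hbr : ∀ ε > 0, HasFiniteBrackets F l ε) : TendstoUniformly F f l := by
  rw [Metric.tendstoUniformly_iff]
  intro ε hε
  obtain ⟨T, hT, lo, hi, a, b, hlim, s, hs, hcov⟩ := hbr (ε / 2) (half_pos hε)
  have hclose : ∀ᶠ t in l, ∀ k ∈ T, a k - ε / 2 < lo k t ∧ hi k t < b k + ε / 2 :=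
    hT.eventually_all.2 fun k hk =>
      ((hlim k hk).1.eventually_const_lt (by linarith)).and
        ((hlim k hk).2.1.eventually_lt_const (by linarith))
  filter_upwards [hclose, hs] with t hclose_t ht i
  obtain ⟨k, hk, hki⟩ := hcov i
  have hsk : ∀ᶠ t in l, lo k t ≤ F t i ∧ F t i ≤ hi k t := mem_of_superset hs hki
  have hak : a k ≤ f i := le_of_tendsto_of_tendsto (hlim k hk).1 (hF i) (hsk.mono fun _ h => h.1)
  have hbk : f i ≤ b k := le_of_tendsto_of_tendsto (hF i) (hlim k hk).2.1 (hsk.mono fun _ h => h.2)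
  obtain ⟨hlo, hhi⟩ := hclose_t k hk
  obtain ⟨hloF, hFhi⟩ := hki t ht
  rw [Real.dist_eq, abs_lt]
  constructor <;> linarith [(hlim k hk).2.2]

theorem TendstoUniformly.tendsto_iSup_abs_sub {l : Filter α} {F : α → ι → ℝ} {f : ι → ℝ}
    (h : TendstoUniformly F f l) : Tendsto (fun t => ⨆ i, |F t i - f i|) l (𝓝 0) := by
  rw [Metric.tendsto_nhds]
  intro ε hε
  filter_upwards [Metric.tendstoUniformly_iff.1 h (ε / 2) (half_pos hε)] with t ht
  have hsup : ⨆ i, |F t i - f i| ≤ ε / 2 :=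
    Real.iSup_le (fun i => by rw [abs_sub_comm]; exact (ht i).le) (half_pos hε).le
  rw [Real.dist_eq, sub_zero, abs_of_nonneg (Real.iSup_nonneg fun _ => abs_nonneg _)]
  linarith

end Bracketing

section Halfspaces

variable {E : Type*} [NormedAddCommGroup E]

theorem isCompact_univ_subtype_norm_eq_one [ProperSpace E] : IsCompact (univ : Set {u : E // ‖u‖ = 1}) := by
  rw [Subtype.isCompact_iff, image_univ, Subtype.range_coe_subtype]
  convert isCompact_sphere (0 : E) 1
  ext
  simp

variable [InnerProductSpace ℝ E]

theorem smul_setOf_le_inner {a : ℝ} (ha : 0 < a) (u : E) (s : ℝ) :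
    a • {x : E | s ≤ ⟪u, x⟫} = {x | a * s ≤ ⟪u, x⟫} := by
  ext x
  rw [Set.mem_smul_set_iff_inv_smul_mem₀ ha.ne']
  simp only [mem_ofPred_eq, real_inner_smul_right, le_inv_mul_iff₀ ha]

theorem exists_pos_le_norm_of_le_inner (u : E) {s : ℝ} (hs : 0 < s) :
    ∃ ε > 0, ∀ x ∈ {x : E | s ≤ ⟪u, x⟫}, ε ≤ ‖x‖ := by
  refine ⟨s / (‖u‖ + 1), by positivity, fun x hx => ?_⟩
  rw [div_le_iff₀ (by positivity)]
  nlinarith [real_inner_le_norm u x, norm_nonneg x, show s ≤ ⟪u, x⟫ from hx]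

theorem setOf_le_inner_subset_union {v w : E} {a b K : ℝ} (h : b + ‖v - w‖ * K ≤ a) :
    {x : E | a ≤ ⟪v, x⟫} ⊆ {x | b ≤ ⟪w, x⟫} ∪ {x | K ≤ ‖x‖} := by
  intro x (hx : a ≤ ⟪v, x⟫)
  by_cases hxK : K ≤ ‖x‖
  · exact Or.inr hxK
  have hvw : ⟪v, x⟫ - ⟪w, x⟫ ≤ ‖v - w‖ * K := by
    rw [← inner_sub_left]
    exact (real_inner_le_norm _ _).trans
      (mul_le_mul_of_nonneg_left (not_le.1 hxK).le (norm_nonneg _))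
  exact Or.inl (show b ≤ ⟪w, x⟫ by linarith)

theorem measurableSet_le_inner [MeasurableSpace E] [OpensMeasurableSpace E] (u : E) (s : ℝ) :
    MeasurableSet {x : E | s ≤ ⟪u, x⟫} :=
  (isClosed_le continuous_const (continuous_const.inner continuous_id)).measurableSet

end Halfspaces

def IsHomogeneousAwayFromZero {E : Type*} [NormedAddCommGroup E] [NormedSpace ℝ E]
    [MeasurableSpace E] (ν : Measure E) (α : ℝ) : Prop :=
  ∀ a : ℝ, 0 < a → ∀ B : Set E, MeasurableSet B → (∃ ε > 0, ∀ x ∈ B, ε ≤ ‖x‖) →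
    ν (a • B) = ENNReal.ofReal (a ^ (-α)) * ν B

namespace IsHomogeneousAwayFromZero

variable {E : Type*} [NormedAddCommGroup E] [InnerProductSpace ℝ E] [MeasurableSpace E]
  [OpensMeasurableSpace E] {ν : Measure E} {α : ℝ}

theorem measure_setOf_le_inner (hν : IsHomogeneousAwayFromZero ν α) (u : E) {a s : ℝ}
    (ha : 0 < a) (hs : 0 < s) :
    ν {x | a * s ≤ ⟪u, x⟫} = ENNReal.ofReal (a ^ (-α)) * ν {x | s ≤ ⟪u, x⟫} := by
  rw [← smul_setOf_le_inner ha]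
  exact hν a ha _ (measurableSet_le_inner u s) (exists_pos_le_norm_of_le_inner u hs)

theorem measure_setOf_le_inner_ne_top (hν : IsHomogeneousAwayFromZero ν α) {u : E}
    (h1 : ν {x | 1 ≤ ⟪u, x⟫} ≠ ⊤) {s : ℝ} (hs : 0 < s) : ν {x | s ≤ ⟪u, x⟫} ≠ ⊤ := by
  rw [← mul_one s, hν.measure_setOf_le_inner u hs one_pos]
  exact ENNReal.mul_ne_top ENNReal.ofReal_ne_top h1

/-- Homogeneity pushes no mass onto a hyperplane: `ν {s < ⟪u, ·⟫}` dominates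
`ν {a * s ≤ ⟪u, ·⟫} = a ^ (-α) • ν {s ≤ ⟪u, ·⟫}` for every `a > 1`. -/
theorem measure_frontier_setOf_le_inner (hν : IsHomogeneousAwayFromZero ν α) {u : E} {s : ℝ}
    (hs : 0 < s) (hfin : ν {x | s ≤ ⟪u, x⟫} ≠ ⊤) : ν (frontier {x | s ≤ ⟪u, x⟫}) = 0 := by
  have hcont : Continuous fun x : E => ⟪u, x⟫ := continuous_const.inner continuous_id
  have hlt : ν {x | s ≤ ⟪u, x⟫} ≤ ν {x | s < ⟪u, x⟫} := by
    have hlim : Tendsto (fun a : ℝ => ENNReal.ofReal (a ^ (-α)) * ν {x | s ≤ ⟪u, x⟫})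
        (𝓝[>] 1) (𝓝 (ν {x | s ≤ ⟪u, x⟫})) := by
      have h := (Real.continuousAt_rpow_const 1 (-α) (Or.inl one_ne_zero)).tendsto
      simpa using ENNReal.Tendsto.mul_const (ENNReal.tendsto_ofReal (h.mono_left nhdsWithin_le_nhds))
        (Or.inr hfin)
    refine le_of_tendsto hlim ?_
    filter_upwards [self_mem_nhdsWithin] with a (ha : 1 < a)
    rw [← hν.measure_setOf_le_inner u (zero_lt_one.trans ha) hs]
    exact measure_mono fun x hx => (lt_mul_of_one_lt_left hs ha).trans_le hx
  have hsub : {x : E | s < ⟪u, x⟫} ⊆ {x | s ≤ ⟪u, x⟫} := fun x (hx : s < ⟪u, x⟫) => hx.le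
  refine nonpos_iff_eq_zero.1 ?_
  calc ν (frontier {x | s ≤ ⟪u, x⟫})
      ≤ ν ({x | s ≤ ⟪u, x⟫} \ {x | s < ⟪u, x⟫}) :=
        measure_mono fun x hx => ⟨(frontier_le_subset_eq continuous_const hcont hx).le,
          fun h => h.ne (frontier_le_subset_eq continuous_const hcont hx)⟩
    _ = ν {x | s ≤ ⟪u, x⟫} - ν {x | s < ⟪u, x⟫} :=
        measure_sdiff hsub (isOpen_lt continuous_const hcont).measurableSet.nullMeasurableSet
          (ne_top_of_le_ne_top hfin (measure_mono hsub))
    _ = 0 := tsub_eq_zero_of_le hlt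

end IsHomogeneousAwayFromZero

section HalfspaceProbabilities

variable {E : Type*} [NormedAddCommGroup E]
variable {Ω : Type*} [MeasurableSpace Ω] (μ : Measure Ω) [IsFiniteMeasure μ] (X : Ω → E)

theorem tendsto_measureReal_le_norm_div_rpow {α c : ℝ}
    (hnorm : Tendsto (fun t => μ.real {ω | t < ‖X ω‖} / t ^ (-α)) atTop (𝓝 c)) :
    Tendsto (fun t => μ.real {ω | t ≤ ‖X ω‖} / t ^ (-α)) atTop (𝓝 c) :=
  tendsto_div_rpow_of_le_of_le_comp_mul hnorm
    (fun t => measureReal_mono fun ω (h : t < ‖X ω‖) => h.le)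
    (fun b hb t ht => measureReal_mono fun ω (h : t ≤ ‖X ω‖) =>
      (mul_lt_of_lt_one_right ht hb.2).trans_le h)

variable [InnerProductSpace ℝ E]

theorem measureReal_le_inner_le_add {v w : E} {a b K : ℝ} (h : b + ‖v - w‖ * K ≤ a) :
    μ.real {ω | a ≤ ⟪v, X ω⟫} ≤ μ.real {ω | b ≤ ⟪w, X ω⟫} + μ.real {ω | K ≤ ‖X ω‖} :=
  (measureReal_mono (preimage_mono (setOf_le_inner_subset_union h))).trans
    (measureReal_union_le _ _)

theorem le_rpow_of_tendsto_measureReal_le_inner {u : E} (hu : ‖u‖ ≤ 1) {α c r L : ℝ}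
    (hr : 0 < r) (hA : Tendsto (fun t => μ.real {ω | t ≤ ‖X ω‖} / t ^ (-α)) atTop (𝓝 c))
    (hL : Tendsto (fun t => μ.real {ω | t * r ≤ ⟪u, X ω⟫} / t ^ (-α)) atTop (𝓝 L)) :
    L ≤ c * r ^ (-α) := by
  refine le_of_tendsto_of_tendsto hL (tendsto_comp_mul_div_rpow hr hA) ?_
  filter_upwards [eventually_gt_atTop 0] with t ht
  refine div_le_div_of_nonneg_right (measureReal_mono fun ω (h : t * r ≤ ⟪u, X ω⟫) => ?_)
    (Real.rpow_pos_of_pos ht _).le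
  exact h.trans ((real_inner_le_norm _ _).trans (mul_le_of_le_one_left (norm_nonneg _) hu))

theorem hasFiniteBrackets_halfspace [ProperSpace E] {α c r ε : ℝ} (hα : 0 < α) (hr : 0 < r)
    (hε : 0 < ε) (hA : Tendsto (fun t => μ.real {ω | t ≤ ‖X ω‖} / t ^ (-α)) atTop (𝓝 c))
    {g : E → ℝ} (hpt : ∀ u : E, ‖u‖ = 1 →
      Tendsto (fun t => μ.real {ω | t * r ≤ ⟪u, X ω⟫} / t ^ (-α)) atTop (𝓝 (g u))) :
    HasFiniteBrackets
      (fun t (u : {u : E // ‖u‖ = 1}) => μ.real {ω | t * r ≤ ⟪u.1, X ω⟫} / t ^ (-α)) atTop ε := by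
  obtain ⟨η, K, hη0, hη1, hK, hgap⟩ := exists_rpow_gap_lt hα (c * r ^ (-α)) (2 * c) hε
  obtain ⟨T, -, hT, hcover⟩ :=
    finite_cover_balls_of_compact (isCompact_univ_subtype_norm_eq_one (E := E)) (by positivity : 0 < η * r / K)
  have hmono : (1 + η) ^ (-α) ≤ (1 - η) ^ (-α) :=
    Real.rpow_le_rpow_of_nonpos (by linarith) (by linarith) (by linarith)
  refine ⟨T, hT,
    fun w t => μ.real {ω | t * (1 + η) * r ≤ ⟪w.1, X ω⟫} / t ^ (-α)
      - μ.real {ω | t * K ≤ ‖X ω‖} / t ^ (-α),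
    fun w t => μ.real {ω | t * (1 - η) * r ≤ ⟪w.1, X ω⟫} / t ^ (-α)
      + μ.real {ω | t * K ≤ ‖X ω‖} / t ^ (-α),
    fun w => g w.1 * (1 + η) ^ (-α) - c * K ^ (-α),
    fun w => g w.1 * (1 - η) ^ (-α) + c * K ^ (-α),
    fun w _ => ⟨?_, ?_, ?_⟩, Ioi 0, Ioi_mem_atTop 0, fun v => ?_⟩
  · exact (tendsto_comp_mul_div_rpow (by linarith) (hpt w.1 w.2)).sub
      (tendsto_comp_mul_div_rpow hK hA)
  · exact (tendsto_comp_mul_div_rpow (by linarith) (hpt w.1 w.2)).add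
      (tendsto_comp_mul_div_rpow hK hA)
  · have := mul_le_mul_of_nonneg_right
      (le_rpow_of_tendsto_measureReal_le_inner μ X w.2.le hr hA (hpt w.1 w.2))
      (sub_nonneg.2 hmono)
    linarith
  obtain ⟨w, hwT, hvw⟩ := mem_iUnion₂.1 (hcover (mem_univ v))
  have hδ : ‖v.1 - w.1‖ * K ≤ η * r := by
    rw [Metric.mem_ball, Subtype.dist_eq, dist_eq_norm, lt_div_iff₀ hK] at hvw
    exact hvw.le
  refine ⟨w, hwT, fun t (ht : 0 < t) => ⟨?_, ?_⟩⟩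
  · have h := measureReal_le_inner_le_add μ X (v := w.1) (w := v.1)
      (a := t * (1 + η) * r) (b := t * r) (K := t * K) (by rw [norm_sub_rev]; nlinarith)
    dsimp only
    rw [sub_le_iff_le_add, ← add_div]
    exact div_le_div_of_nonneg_right h (Real.rpow_pos_of_pos ht _).le
  · have h := measureReal_le_inner_le_add μ X (v := v.1) (w := w.1)
      (a := t * r) (b := t * (1 - η) * r) (K := t * K) (by nlinarith)
    dsimp only
    rw [← add_div]
    exact div_le_div_of_nonneg_right h (Real.rpow_pos_of_pos ht _).le

end HalfspaceProbabilities

theorem lemma1_uniform_convergence_general {d : ℕ} {Ω : Type*} [MeasurableSpace Ω]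
    (μ : Measure Ω) [IsProbabilityMeasure μ]
    (X : Ω → EuclideanSpace ℝ (Fin d))
    (α c : ℝ) (hα : 0 < α) (hc : 0 < c) (ν : Measure (EuclideanSpace ℝ (Fin d)))
    (hom : ∀ a : ℝ, 0 < a → ∀ B : Set (EuclideanSpace ℝ (Fin d)), MeasurableSet B →
      (∃ ε > 0, ∀ x ∈ B, ε ≤ ‖x‖) → ν (a • B) = ENNReal.ofReal (a ^ (-α)) * ν B)
    (hconv : ∀ B : Set (EuclideanSpace ℝ (Fin d)), MeasurableSet B →
      (∃ ε > 0, ∀ x ∈ B, ε ≤ ‖x‖) → ν (frontier B) = 0 → ν B ≠ ⊤ →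
      Tendsto (fun t : ℝ =>
          (μ {ω | X ω ∈ t • B}).toReal / (μ {ω | t ≤ ‖X ω‖}).toReal)
        atTop (nhds (ν B).toReal))
    (hnorm : Tendsto (fun t : ℝ => (μ {ω | t < ‖X ω‖}).toReal / t ^ (-α))
      atTop (nhds c))
    (hfin : ∀ u : EuclideanSpace ℝ (Fin d), ‖u‖ = 1 → ν {x | 1 ≤ ⟪u, x⟫} ≠ ⊤)
    (r : ℝ) (hr : 0 < r) :
    Tendsto (fun t : ℝ => ⨆ u : {u : EuclideanSpace ℝ (Fin d) // ‖u‖ = 1},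
        |(μ {ω | t * r ≤ ⟪u.1, X ω⟫}).toReal / t ^ (-α)
          - c * (ν {x | r ≤ ⟪u.1, x⟫}).toReal|)
      atTop (nhds 0) := by
  have hν : IsHomogeneousAwayFromZero ν α := hom
  have hA := tendsto_measureReal_le_norm_div_rpow μ X hnorm
  have hpt : ∀ u : EuclideanSpace ℝ (Fin d), ‖u‖ = 1 →
      Tendsto (fun t => μ.real {ω | t * r ≤ ⟪u, X ω⟫} / t ^ (-α)) atTop
        (𝓝 (c * ν.real {x | r ≤ ⟪u, x⟫})) := by
    intro u hu
    have hfin_r := hν.measure_setOf_le_inner_ne_top (hfin u hu) hr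
    have hH := hconv _ (measurableSet_le_inner u r) (exists_pos_le_norm_of_le_inner u hr)
      (hν.measure_frontier_setOf_le_inner hr hfin_r) hfin_r
    rw [mul_comm]
    refine (hH.div_mul_div_cancel hA hc.ne').congr' ?_
    filter_upwards [eventually_gt_atTop 0] with t ht
    rw [smul_setOf_le_inner ht]
    rfl
  have hunif := tendstoUniformly_of_hasFiniteBrackets
    (fun u : {u : EuclideanSpace ℝ (Fin d) // ‖u‖ = 1} => hpt u.1 u.2) fun ε hε =>
      hasFiniteBrackets_halfspace μ X hα hr hε hA hpt
  exact hunif.tendsto_iSup_abs_sub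

/-- Lemma 1: under multivariate regular variation with limit measure `ν`
homogeneous of degree `-α` and `P(‖X₁‖ > t)/t^{-α} → c ∈ (0,∞)`, for every fixed
`r > 0` the convergence `P(X₁ ∈ tH_{r,u})/t^{-α} → c ν(H_{r,u})` holds uniformly
over unit vectors `u`. -/
theorem lemma1_uniform_convergence {d : ℕ} (hd : 0 < d) {Ω : Type*} [MeasurableSpace Ω]
    (μ : Measure Ω) [IsProbabilityMeasure μ]
    (X : Ω → EuclideanSpace ℝ (Fin d)) (hX : Measurable X)
    (α c : ℝ) (hα : 0 < α) (hc : 0 < c) (ν : Measure (EuclideanSpace ℝ (Fin d)))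
    (hom : ∀ a : ℝ, 0 < a → ∀ B : Set (EuclideanSpace ℝ (Fin d)), MeasurableSet B →
      (∃ ε > 0, ∀ x ∈ B, ε ≤ ‖x‖) → ν (a • B) = ENNReal.ofReal (a ^ (-α)) * ν B)
    (hconv : ∀ B : Set (EuclideanSpace ℝ (Fin d)), MeasurableSet B →
      (∃ ε > 0, ∀ x ∈ B, ε ≤ ‖x‖) → ν (frontier B) = 0 → ν B ≠ ⊤ →
      Tendsto (fun t : ℝ =>
          (μ {ω | X ω ∈ t • B}).toReal / (μ {ω | t ≤ ‖X ω‖}).toReal)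
        atTop (nhds (ν B).toReal))
    (hnorm : Tendsto (fun t : ℝ => (μ {ω | t < ‖X ω‖}).toReal / t ^ (-α))
      atTop (nhds c))
    (hcont : ∀ u : EuclideanSpace ℝ (Fin d), ‖u‖ = 1 →
      Continuous (fun w : ℝ => (μ {ω | ⟪u, X ω⟫ ≤ w}).toReal))
    (hfin : ∀ u : EuclideanSpace ℝ (Fin d), ‖u‖ = 1 → ν {x | 1 ≤ ⟪u, x⟫} ≠ ⊤)
    (hpos : ∃ m > 0, ∀ u : EuclideanSpace ℝ (Fin d), ‖u‖ = 1 →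
      ENNReal.ofReal m ≤ ν {x | 1 ≤ ⟪u, x⟫})
    (r : ℝ) (hr : 0 < r) :
    Tendsto (fun t : ℝ => ⨆ u : {u : EuclideanSpace ℝ (Fin d) // ‖u‖ = 1},
        |(μ {ω | t * r ≤ ⟪u.1, X ω⟫}).toReal / t ^ (-α)
          - c * (ν {x | r ≤ ⟪u.1, x⟫}).toReal|)
      atTop (nhds 0) :=
  lemma1_uniform_convergence_general μ X α c hα hc ν hom hconv hnorm hfin r hr
end

section
/- Under the assumptions of Theorem 2 (Lemma 3): lim_{t→∞} sup_{‖u‖=1} | V_u(t)/t^{1/α} − g(u)^{1/α} | = 0, where V_u(t) = F_u^{-1}(1 − 1/t) is the tail quantile function of the projection uᵀX₁ and g(u) = c·ν(H_{1,u}). -/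
open Filter

set_option maxHeartbeats 1600000 in
/-- Lemma 3: under the assumptions of Theorem 2 (expressed through the uniform
convergence of the projection tails, Lemma 1 with `r = 1`), the tail quantile
functions `V_u(t) = F_u^{-1}(1 - 1/t)` satisfy
`sup_{‖u‖=1} |V_u(t)/t^{1/α} - g(u)^{1/α}| → 0` as `t → ∞`, where
`g(u) = c ν(H_{1,u})`. -/
theorem lemma3_tail_quantile_uniform {d : ℕ} (hd : 0 < d) (α c : ℝ)
    (hα : 0 < α) (hc : 0 < c)
    (F : {u : EuclideanSpace ℝ (Fin d) // ‖u‖ = 1} → ℝ → ℝ)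
    (g : {u : EuclideanSpace ℝ (Fin d) // ‖u‖ = 1} → ℝ)
    (V : {u : EuclideanSpace ℝ (Fin d) // ‖u‖ = 1} → ℝ → ℝ)
    (hFcont : ∀ u, Continuous (F u)) (hFmono : ∀ u, Monotone (F u))
    (hF0 : ∀ u, Tendsto (F u) atBot (nhds 0))
    (hF1 : ∀ u, Tendsto (F u) atTop (nhds 1))
    (hV : ∀ u t, V u t = sInf {w : ℝ | 1 - 1 / t ≤ F u w})
    (hg : ∃ m > 0, ∀ u, m ≤ g u) (hgc : ∀ u, g u ≤ c)
    (hunif : Tendsto (fun s : ℝ =>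
        ⨆ u, |(1 - F u s) / s ^ (-α) - g u|) atTop (nhds 0)) :
    Tendsto (fun t : ℝ =>
        ⨆ u, |V u t / t ^ (1 / α) - (g u) ^ (1 / α)|) atTop (nhds 0) := by
  obtain ⟨m, hm, hgm⟩ := hg
  obtain ⟨β, hβdef⟩ : ∃ β : ℝ, β = 1 / α := ⟨_, rfl⟩
  have hβpos : 0 < β := by rw [hβdef]; positivity
  -- uniform continuity of x ↦ x ^ β on the compact set K = [m/2, c+1]
  have hcont : ContinuousOn (fun x : ℝ => x ^ β) (Set.Icc (m / 2) (c + 1)) :=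
    ContinuousOn.rpow_const continuousOn_id (fun x _ => Or.inr hβpos.le)
  have huc := (isCompact_Icc.uniformContinuousOn_of_continuous hcont)
  rw [Metric.uniformContinuousOn_iff] at huc
  rw [Metric.tendsto_atTop]
  intro ε hε
  obtain ⟨δ, hδ, hδε⟩ := huc (ε / 2) (by positivity)
  obtain ⟨η, hηdef⟩ : ∃ η : ℝ, η = min (δ / 2) (min (m / 2) 1) := ⟨_, rfl⟩
  have hηpos : 0 < η := hηdef ▸ lt_min (by linarith) (lt_min (by linarith) one_pos)
  have hηδ : η < δ := lt_of_le_of_lt (hηdef ▸ min_le_left _ _) (by linarith)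
  have hηm : η ≤ m / 2 := (hηdef ▸ (min_le_right _ _)).trans (min_le_left _ _)
  have hη1 : η ≤ 1 := (hηdef ▸ (min_le_right _ _)).trans (min_le_right _ _)
  -- threshold from the uniform tail convergence
  obtain ⟨S₀, hS₀⟩ := (Metric.tendsto_atTop.1 hunif) (η / 2) (by positivity)
  obtain ⟨S, hSdef⟩ : ∃ S : ℝ, S = max S₀ 1 := ⟨_, rfl⟩
  have hS1 : (1 : ℝ) ≤ S := hSdef ▸ le_max_right _ _
  have hSpos : (0 : ℝ) < S := by linarith
  -- pointwise tail bound for s ≥ S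
  have htail : ∀ s, S ≤ s → ∀ u, |(1 - F u s) / s ^ (-α) - g u| < η / 2 := by
    intro s hs u
    have hs1 : (1 : ℝ) ≤ s := hS1.trans hs
    have hsp : (0 : ℝ) < s := by linarith
    have hsna : (0 : ℝ) < s ^ (-α) := Real.rpow_pos_of_pos hsp _
    have hbdd : BddAbove (Set.range fun v => |(1 - F v s) / s ^ (-α) - g v|) := by
      refine ⟨s ^ α + c, ?_⟩
      rintro x ⟨v, rfl⟩
      have h0 : 0 ≤ F v s := (hFmono v).le_of_tendsto (hF0 v) s
      have h1 : F v s ≤ 1 := (hFmono v).ge_of_tendsto (hF1 v) s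
      have hgv0 : 0 ≤ g v := le_trans hm.le (hgm v)
      have hdiv : (1 - F v s) / s ^ (-α) ≤ s ^ α := by
        rw [div_le_iff₀ hsna, Real.rpow_neg hsp.le,
          mul_inv_cancel₀ (Real.rpow_pos_of_pos hsp α).ne']
        linarith
      have hdiv0 : 0 ≤ (1 - F v s) / s ^ (-α) := div_nonneg (by linarith) hsna.le
      have habs := abs_sub ((1 - F v s) / s ^ (-α)) (g v)
      rw [abs_of_nonneg hdiv0, abs_of_nonneg hgv0] at habs
      calc |(1 - F v s) / s ^ (-α) - g v| ≤ (1 - F v s) / s ^ (-α) + g v := habs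
        _ ≤ s ^ α + c := add_le_add hdiv (hgc v)
    have hle := le_ciSup hbdd u
    have hsup := hS₀ s ((hSdef ▸ le_max_left S₀ 1 : S₀ ≤ S).trans hs)
    rw [Real.dist_eq, sub_zero] at hsup
    exact lt_of_le_of_lt (hle.trans (le_abs_self _)) hsup
  -- threshold for t
  refine ⟨max 2 (2 * S ^ α / m), fun t ht => ?_⟩
  have ht2 : (2 : ℝ) ≤ t := (le_max_left _ _).trans ht
  have htp : (0 : ℝ) < t := by linarith
  have htS : 2 * S ^ α / m ≤ t := (le_max_right _ _).trans ht
  have htβ : (0 : ℝ) < t ^ β := Real.rpow_pos_of_pos htp _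
  -- the per-direction bound
  have key : ∀ u, |V u t / t ^ (1 / α) - g u ^ (1 / α)| ≤ ε / 2 := by
    intro u
    have hgu : m ≤ g u := hgm u
    have hguc : g u ≤ c := hgc u
    obtain ⟨a, hadef⟩ : ∃ a : ℝ, a = g u - η := ⟨_, rfl⟩
    obtain ⟨b, hbdef⟩ : ∃ b : ℝ, b = g u + η := ⟨_, rfl⟩
    have ham : m / 2 ≤ a := by rw [hadef]; linarith
    have hap : 0 < a := by linarith
    have hbp : 0 < b := by rw [hbdef]; linarith
    have hbc : b ≤ c + 1 := by rw [hbdef]; linarith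
    have hab : a ≤ b := by rw [hadef, hbdef]; linarith
    obtain ⟨slo, hslodef⟩ : ∃ x : ℝ, x = (a * t) ^ β := ⟨_, rfl⟩
    obtain ⟨shi, hshidef⟩ : ∃ x : ℝ, x = (b * t) ^ β := ⟨_, rfl⟩
    have hatp : 0 < a * t := by positivity
    have hbtp : 0 < b * t := by positivity
    -- slo ≥ S
    have hSlo : S ≤ slo := by
      have h2 : 2 * S ^ α ≤ t * m := (div_le_iff₀ hm).1 htS
      have h3 : m / 2 * t ≤ a * t := mul_le_mul_of_nonneg_right ham htp.le
      have h1 : S ^ α ≤ a * t := by nlinarith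
      calc S = (S ^ α) ^ β := by
            rw [← Real.rpow_mul hSpos.le, hβdef, mul_one_div_cancel hα.ne', Real.rpow_one]
        _ ≤ (a * t) ^ β := Real.rpow_le_rpow (by positivity) h1 hβpos.le
        _ = slo := hslodef.symm
    have hlohi : slo ≤ shi := by
      rw [hslodef, hshidef]
      exact Real.rpow_le_rpow hatp.le (mul_le_mul_of_nonneg_right hab htp.le) hβpos.le
    -- rpow computations
    have hβα : β * (-α) = -1 := by rw [hβdef]; field_simp
    have hsloa : slo ^ (-α) = (a * t)⁻¹ := by
      rw [hslodef, ← Real.rpow_mul hatp.le, hβα, Real.rpow_neg_one]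
    have hshia : shi ^ (-α) = (b * t)⁻¹ := by
      rw [hshidef, ← Real.rpow_mul hbtp.le, hβα, Real.rpow_neg_one]
    have hslopos : 0 < slo := hslodef ▸ Real.rpow_pos_of_pos hatp _
    have hshipos : 0 < shi := hshidef ▸ Real.rpow_pos_of_pos hbtp _
    -- upper tail bound at shi : F u shi ≥ 1 - 1/t
    have hhi : 1 - 1 / t ≤ F u shi := by
      have h := abs_lt.1 (htail shi (hSlo.trans hlohi) u)
      have h1 : (1 - F u shi) / shi ^ (-α) ≤ g u + η / 2 := by linarith [h.2]
      have hsna : 0 < shi ^ (-α) := Real.rpow_pos_of_pos hshipos _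
      rw [div_le_iff₀ hsna, hshia] at h1
      have h2 : (g u + η / 2) * (b * t)⁻¹ < 1 / t := by
        rw [← div_eq_mul_inv, div_lt_div_iff₀ hbtp htp]
        have hlt : g u + η / 2 < b := by rw [hbdef]; linarith
        nlinarith
      linarith
    -- lower tail bound at slo : F u slo < 1 - 1/t
    have hlo : F u slo < 1 - 1 / t := by
      have h := abs_lt.1 (htail slo hSlo u)
      have h1 : g u - η / 2 ≤ (1 - F u slo) / slo ^ (-α) := by linarith [h.1]
      have hsna : 0 < slo ^ (-α) := Real.rpow_pos_of_pos hslopos _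
      rw [le_div_iff₀ hsna, hsloa] at h1
      have h2 : 1 / t < (g u - η / 2) * (a * t)⁻¹ := by
        rw [← div_eq_mul_inv, div_lt_div_iff₀ htp hatp]
        have hlt : a < g u - η / 2 := by rw [hadef]; linarith
        nlinarith
      linarith
    -- the quantile is squeezed between slo and shi
    have hmem : shi ∈ {w : ℝ | 1 - 1 / t ≤ F u w} := hhi
    have hlb : ∀ w ∈ {w : ℝ | 1 - 1 / t ≤ F u w}, slo ≤ w := by
      intro w hw
      by_contra hcon
      push_neg at hcon
      exact absurd (le_trans hw (hFmono u hcon.le)) (not_le.2 hlo)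
    have hVle : V u t ≤ shi := by
      rw [hV]; exact csInf_le ⟨slo, hlb⟩ hmem
    have hVge : slo ≤ V u t := by
      rw [hV]; exact le_csInf ⟨shi, hmem⟩ hlb
    -- translate into bounds on V u t / t ^ β
    have hsloeq : slo = a ^ β * t ^ β := by rw [hslodef]; exact Real.mul_rpow hap.le htp.le
    have hshieq : shi = b ^ β * t ^ β := by rw [hshidef]; exact Real.mul_rpow hbp.le htp.le
    have hup : V u t / t ^ β ≤ b ^ β := by
      rw [div_le_iff₀ htβ]; rw [hshieq] at hVle; linarith
    have hdn : a ^ β ≤ V u t / t ^ β := by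
      rw [le_div_iff₀ htβ]; rw [hsloeq] at hVge; linarith
    -- uniform continuity estimates
    have hgK : g u ∈ Set.Icc (m / 2) (c + 1) := ⟨by linarith, by linarith⟩
    have haK : a ∈ Set.Icc (m / 2) (c + 1) := ⟨ham, by rw [hadef]; linarith⟩
    have hbK : b ∈ Set.Icc (m / 2) (c + 1) := ⟨by rw [hbdef]; linarith, hbc⟩
    have h1 := hδε b hbK (g u) hgK (by
      rw [Real.dist_eq, hbdef, abs_of_nonneg (by linarith : (0:ℝ) ≤ g u + η - g u)]
      linarith)
    have h2 := hδε (g u) hgK a haK (by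
      rw [Real.dist_eq, hadef, abs_of_nonneg (by linarith : (0:ℝ) ≤ g u - (g u - η))]
      linarith)
    rw [Real.dist_eq] at h1 h2
    have hb1 := le_abs_self (b ^ β - g u ^ β)
    have hb2 := le_abs_self (g u ^ β - a ^ β)
    rw [hβdef] at hup hdn hb1 hb2 h1 h2
    refine abs_le.2 ⟨by linarith, by linarith⟩
  -- conclude
  have hnn : 0 ≤ ⨆ u, |V u t / t ^ (1 / α) - g u ^ (1 / α)| :=
    Real.iSup_nonneg fun u => abs_nonneg _
  have hub : (⨆ u, |V u t / t ^ (1 / α) - g u ^ (1 / α)|) ≤ ε / 2 :=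
    Real.iSup_le key (by positivity)
  rw [Real.dist_eq, sub_zero, abs_of_nonneg hnn]
  linarith
end

section
/- Monotonicity relative to the deepest point for half-space depth: if x̂ maximizes D, and x₀ lies on the segment between x̂ and x, then D(x) ≤ D(x₀). -/
open scoped RealInnerProductSpace ENNReal

/-- Monotonicity relative to the deepest point: if `xhat` maximizes the
half-space depth `D` and `x₀` lies on the segment between `xhat` and `x`, then
`D(x) ≤ D(x₀)`. -/
theorem halfspace_depth_monotone_from_deepest {d : ℕ}
    (P : MeasureTheory.Measure (EuclideanSpace ℝ (Fin d)))
    [MeasureTheory.IsProbabilityMeasure P]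
    (D : EuclideanSpace ℝ (Fin d) → ℝ≥0∞)
    (hD : ∀ x, D x = sInf {p : ℝ≥0∞ | ∃ (u : EuclideanSpace ℝ (Fin d)) (c : ℝ),
      ‖u‖ = 1 ∧ ⟪u, x⟫ = c ∧ p = P {y | c ≤ ⟪u, y⟫}})
    (xhat x x₀ : EuclideanSpace ℝ (Fin d))
    (hmax : ∀ y, D y ≤ D xhat)
    (l : ℝ) (hl : l ∈ Set.Icc (0 : ℝ) 1)
    (hx₀ : x₀ = l • xhat + (1 - l) • x) :
    D x ≤ D x₀ := by
  rw [hD x₀]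
  refine le_sInf ?_
  rintro p ⟨u, c, hu, hc, rfl⟩
  have hx₀c : c = l * ⟪u, xhat⟫ + (1 - l) * ⟪u, x⟫ := by
    rw [← hc, hx₀]
    simp [inner_add_right, real_inner_smul_right, Finset.mul_sum, mul_left_comm]
  by_cases h : c ≤ ⟪u, x⟫
  · calc D x ≤ P {y | ⟪u, x⟫ ≤ ⟪u, y⟫} := by
          rw [hD x]; exact sInf_le ⟨u, ⟪u, x⟫, hu, rfl, rfl⟩
      _ ≤ P {y | c ≤ ⟪u, y⟫} :=
          MeasureTheory.measure_mono (fun y hy => le_trans h hy)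
  · push_neg at h
    have hb : c ≤ ⟪u, xhat⟫ := by
      nlinarith [hl.1, hl.2, mul_nonneg hl.1 (sub_nonneg.2 hl.2),
        sq_nonneg (⟪u, xhat⟫ - ⟪u, x⟫)]
    calc D x ≤ D xhat := hmax x
      _ ≤ P {y | ⟪u, xhat⟫ ≤ ⟪u, y⟫} := by
          rw [hD xhat]; exact sInf_le ⟨u, ⟪u, xhat⟫, hu, rfl, rfl⟩
      _ ≤ P {y | c ≤ ⟪u, y⟫} :=
          MeasureTheory.measure_mono (fun y hy => le_trans hb hy)
end

section
/- For d ≥ 1 and any x₁,…,x_n ∈ ℝ^d, the maximum over x of the empirical half-space depth satisfies sup_x D_n(x) ≥ 1/(d+1). -/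
open scoped RealInnerProductSpace

open Finset in
private lemma centerpoint_aux {d n : ℕ} (hd : 0 < d) (hn : 0 < n)
    (X : Fin n → EuclideanSpace ℝ (Fin d)) :
    ∃ x : EuclideanSpace ℝ (Fin d), ∀ T : Finset (Fin n),
      n * d < T.card * (d + 1) → x ∈ convexHull ℝ (X '' ↑T) := by
  classical
  set s : Finset (Finset (Fin n)) :=
    Finset.univ.filter (fun T => n * d < T.card * (d + 1)) with hs
  have hkey : (⋂ T ∈ s, convexHull ℝ (X '' (T : Set (Fin n)))).Nonempty := by
    apply Convex.helly_theorem' (𝕜 := ℝ)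
    · intro T _; exact convex_convexHull ℝ _
    · intro I hI hIcard
      rw [finrank_euclideanSpace_fin] at hIcard
      -- find a common index in all T ∈ I
      have hcompl : ∀ T ∈ I, (Tᶜ : Finset (Fin n)).card * (d + 1) ≤ n - 1 := by
        intro T hT
        have hTs := hI hT
        rw [hs, Finset.mem_filter] at hTs
        have hT1 : n * d < T.card * (d + 1) := hTs.2
        have hT2 : T.card ≤ n := by
          simpa using Finset.card_le_card (Finset.subset_univ T)
        have hcc : (Tᶜ : Finset (Fin n)).card = n - T.card := by
          simp [Finset.card_compl]
        rw [hcc, Nat.sub_mul]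
        have : T.card * (d + 1) = T.card * d + T.card := by ring
        have h2 : n * (d + 1) = n * d + n := by ring
        omega
      have hU : (I.biUnion (fun T => Tᶜ)).card < n := by
        have h1 : (I.biUnion (fun T => Tᶜ)).card ≤ ∑ T ∈ I, (Tᶜ : Finset (Fin n)).card :=
          Finset.card_biUnion_le
        have h2 : ∑ T ∈ I, ((Tᶜ : Finset (Fin n)).card * (d + 1)) ≤ ∑ T ∈ I, (n - 1) :=
          Finset.sum_le_sum hcompl
        rw [← Finset.sum_mul, Finset.sum_const, smul_eq_mul] at h2
        have h3 : I.card * (n - 1) ≤ (d + 1) * (n - 1) :=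
          Nat.mul_le_mul_right _ hIcard
        have h4 : (I.biUnion (fun T => Tᶜ)).card * (d + 1) ≤ (∑ T ∈ I, (Tᶜ : Finset (Fin n)).card) * (d + 1) :=
          Nat.mul_le_mul_right _ h1
        have h5 : (I.biUnion fun T => Tᶜ).card * (d + 1) ≤ (d + 1) * (n - 1) :=
          le_trans h4 (le_trans h2 h3)
        have h6 : (d + 1) * (n - 1) < (d + 1) * n :=
          (Nat.mul_lt_mul_left (by omega)).2 (by omega)
        have h7 : (I.biUnion fun T => Tᶜ).card * (d + 1) < n * (d + 1) :=
          lt_of_le_of_lt h5 (by rw [mul_comm n]; exact h6)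
        exact Nat.lt_of_mul_lt_mul_right h7
      obtain ⟨i, hi⟩ : ∃ i : Fin n, i ∉ I.biUnion (fun T => Tᶜ) := by
        by_contra h
        push_neg at h
        have : (Finset.univ : Finset (Fin n)) ⊆ I.biUnion (fun T => Tᶜ) := fun i _ => h i
        have := Finset.card_le_card this
        simp at this
        omega
      refine ⟨X i, Set.mem_iInter₂.2 fun T hT => ?_⟩
      apply subset_convexHull
      refine ⟨i, ?_, rfl⟩
      simp only [Finset.mem_biUnion, not_exists] at hi
      by_contra hiT
      exact hi T ⟨hT, Finset.mem_compl.2 hiT⟩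
  obtain ⟨x, hx⟩ := hkey
  refine ⟨x, fun T hT => ?_⟩
  have hTs : T ∈ s := by rw [hs, Finset.mem_filter]; exact ⟨Finset.mem_univ _, hT⟩
  exact Set.mem_iInter₂.1 hx T hTs

/-- The centerpoint theorem: for any `x₁,…,x_n ∈ ℝ^d` there is a point whose
empirical half-space depth is at least `1/(d+1)`; hence
`sup_x D_n(x) ≥ 1/(d+1)`. -/
theorem empirical_depth_centerpoint {d n : ℕ} (hd : 0 < d) (hn : 0 < n)
    (X : Fin n → EuclideanSpace ℝ (Fin d)) :
    ∃ x : EuclideanSpace ℝ (Fin d),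
      (1 : ℝ) / ((d : ℝ) + 1) ≤
        (1 / (n : ℝ)) * ⨅ u : {u : EuclideanSpace ℝ (Fin d) // ‖u‖ = 1},
          (({i : Fin n | ⟪u.1, x⟫ ≤ ⟪u.1, X i⟫} : Set (Fin n)).ncard : ℝ) := by
  classical
  obtain ⟨x, hx⟩ := centerpoint_aux hd hn X
  refine ⟨x, ?_⟩
  have hne : Nonempty {u : EuclideanSpace ℝ (Fin d) // ‖u‖ = 1} := by
    refine ⟨⟨EuclideanSpace.single ⟨0, hd⟩ (1 : ℝ), ?_⟩⟩
    rw [EuclideanSpace.norm_single]; simp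
  -- the key counting bound for each direction u
  have hcount : ∀ u : {u : EuclideanSpace ℝ (Fin d) // ‖u‖ = 1},
      (n : ℝ) / ((d : ℝ) + 1) ≤
        (({i : Fin n | ⟪u.1, x⟫ ≤ ⟪u.1, X i⟫} : Set (Fin n)).ncard : ℝ) := by
    intro u
    set A : Finset (Fin n) := Finset.univ.filter (fun i => ⟪u.1, x⟫ ≤ ⟪u.1, X i⟫) with hA
    have hset : ({i : Fin n | ⟪u.1, x⟫ ≤ ⟪u.1, X i⟫} : Set (Fin n)) = ↑A := by
      ext i; simp [hA]
    rw [hset, Set.ncard_coe_finset]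
    have hmain : n ≤ A.card * (d + 1) := by
      by_contra hlt
      push_neg at hlt
      have hAn : A.card ≤ n := by simpa using Finset.card_le_card (Finset.subset_univ A)
      have hT : n * d < (Aᶜ : Finset (Fin n)).card * (d + 1) := by
        have hcc : (Aᶜ : Finset (Fin n)).card = n - A.card := by simp [Finset.card_compl]
        rw [hcc, Nat.sub_mul]
        have h2 : n * (d + 1) = n * d + n := by ring
        have h3 : A.card * (d + 1) = A.card * d + A.card := by ring
        omega
      have hxmem := hx Aᶜ hT
      have hconv : Convex ℝ {y : EuclideanSpace ℝ (Fin d) | ⟪u.1, y⟫ < ⟪u.1, x⟫} := by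
        apply convex_halfSpace_lt
        exact ⟨fun a b => inner_add_right _ _ _, fun c y => real_inner_smul_right _ _ _⟩
      have hsub : X '' (↑(Aᶜ : Finset (Fin n))) ⊆
          {y : EuclideanSpace ℝ (Fin d) | ⟪u.1, y⟫ < ⟪u.1, x⟫} := by
        rintro _ ⟨i, hi, rfl⟩
        simp only [Finset.coe_compl, Set.mem_compl_iff, Finset.mem_coe, hA,
          Finset.mem_filter, Finset.mem_univ, true_and] at hi
        exact not_le.1 hi
      have := convexHull_min hsub hconv hxmem
      simp at this
    have hd1 : (0 : ℝ) < (d : ℝ) + 1 := by positivity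
    rw [div_le_iff₀ hd1]
    have : (n : ℝ) ≤ (A.card : ℝ) * ((d : ℝ) + 1) := by
      have := (Nat.cast_le (α := ℝ)).2 hmain
      push_cast at this
      linarith
    linarith
  have hinf : (n : ℝ) / ((d : ℝ) + 1) ≤
      ⨅ u : {u : EuclideanSpace ℝ (Fin d) // ‖u‖ = 1},
        (({i : Fin n | ⟪u.1, x⟫ ≤ ⟪u.1, X i⟫} : Set (Fin n)).ncard : ℝ) :=
    le_ciInf hcount
  have hnpos : (0 : ℝ) < (n : ℝ) := by exact_mod_cast hn
  have h1 : (1 : ℝ) / ((d : ℝ) + 1) = (1 / (n : ℝ)) * ((n : ℝ) / ((d : ℝ) + 1)) := by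
    field_simp
  rw [h1]
  apply mul_le_mul_of_nonneg_left hinf
  positivity
end
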